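/- Let p be an odd prime, u a quadratic non-residue mod p, r ≥ 1, and 0 ≤ s ≤ r. Let q(x) = (p^r+1)x²/(2p^r) on ℤ/p^rℤ. Then Θ(ℤ/p^rℤ, p^s q) = (-1)^{r-s} Θ(ℤ/p^rℤ, u p^s q), where Θ(G,q) = |G|^{-1/2} ∑_{x∈G} e^{2πi q(x)}. -/

import Mathlib

/-!
With `2m = p^r + 1` the summand is `e(p^s m x² / p^r)`, so by periodicity the sum is
`p^s G(m, p^(r-s))` for the quadratic Gauss sum `G(c, n) = ∑_{x < n} e(c x² / n)`.
For `n` coprime to `2c` one has `G(c, n² m) = n G(c, m)`: writing `x = nm z + y`, the sum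
over `z` vanishes unless `n ∣ y`. This reduces `G(uc, p^k) = (-1)^k G(c, p^k)` to `k = 1`.
There, counting square roots with the quadratic character `χ` gives
`G(c, p) = ∑_y χ(y) e(cy / p)`, and replacing `c` by `uc` multiplies this by `χ(u) = -1`.
-/

open Finset Complex

section FiniteField

variable {F : Type*} [Field F] [Fintype F] [DecidableEq F]

theorem sum_sq_eq_sum_quadraticChar_add_one {M : Type*} [AddCommGroup M] (hF : ringChar F ≠ 2)
    (f : F → M) : ∑ x, f (x ^ 2) = ∑ y, (quadraticChar F y + 1) • f y := by
  rw [← sum_fiberwise univ (· ^ 2)]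
  refine sum_congr rfl fun y _ ↦ ?_
  rw [sum_congr rfl fun x hx ↦ congrArg f (mem_filter.mp hx).2, sum_const,
    ← quadraticChar_card_sqrts hF y, Set.toFinset_ofPred, natCast_zsmul]

theorem AddChar.sum_mul_sq_of_not_isSquare {R : Type*} [CommRing R] [IsDomain R]
    (hF : ringChar F ≠ 2) {ψ : AddChar F R} (hψ : ψ ≠ 1) {u : F} (hu : ¬IsSquare u) :
    ∑ x, ψ (u * x ^ 2) = -∑ x, ψ (x ^ 2) := by
  have hu0 : u ≠ 0 := by rintro rfl; exact hu ⟨0, by simp⟩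
  have hχu : quadraticChar F u = -1 := quadraticChar_neg_one_iff_not_isSquare.mpr hu
  have hψu : ∑ y, ψ (u * y) = 0 := by
    rw [Fintype.sum_bijective _ (mulLeft_bijective₀ u hu0) _ (⇑ψ) fun _ ↦ rfl]
    exact AddChar.sum_eq_zero_of_ne_one hψ
  have hχ : ∀ y, quadraticChar F y = -quadraticChar F (u * y) := by
    intro y
    rw [map_mul, hχu]
    ring
  rw [sum_sq_eq_sum_quadraticChar_add_one hF (fun y ↦ ψ (u * y)),
    sum_sq_eq_sum_quadraticChar_add_one hF ψ]
  simp only [add_smul, one_smul, sum_add_distrib, hψu, AddChar.sum_eq_zero_of_ne_one hψ, add_zero]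
  rw [sum_congr rfl fun y _ ↦ by rw [hχ y, neg_smul], sum_neg_distrib,
    Fintype.sum_bijective _ (mulLeft_bijective₀ u hu0) _ (fun y ↦ quadraticChar F y • ψ y)
      fun _ ↦ rfl]

end FiniteField

theorem Finset.sum_range_mul {M : Type*} [AddCommMonoid M] (f : ℕ → M) (a b : ℕ) :
    ∑ x ∈ range (a * b), f x = ∑ z ∈ range b, ∑ y ∈ range a, f (a * z + y) := by
  induction b with
  | zero => simp
  | succ b ih => rw [mul_add_one, sum_range_add, ih, sum_range_succ]

theorem Finset.sum_range_mul_ite_dvd {M : Type*} [AddCommMonoid M] (g : ℕ → M) {n : ℕ}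
    (hn : n ≠ 0) (m : ℕ) :
    ∑ y ∈ range (n * m), (if n ∣ y then g y else 0) = ∑ w ∈ range m, g (n * w) := by
  rw [sum_range_mul]
  refine sum_congr rfl fun w _ ↦ ?_
  rw [sum_eq_single_of_mem 0 (mem_range.mpr (Nat.pos_of_ne_zero hn)), add_zero,
    if_pos (dvd_mul_right n w)]
  intro t ht ht0
  rw [if_neg fun h ↦ ht0 (Nat.eq_zero_of_dvd_of_lt ((Nat.dvd_add_right (dvd_mul_right n w)).mp h)
    (mem_range.mp ht))]

theorem ZMod.sum_range_natCast {M : Type*} [AddCommMonoid M] (n : ℕ) [NeZero n]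
    (f : ZMod n → M) : ∑ x ∈ range n, f x = ∑ x, f x := by
  refine sum_nbij' (fun x ↦ x) ZMod.val (fun _ _ ↦ mem_univ _)
    (fun x _ ↦ mem_range.mpr (ZMod.val_lt x)) (fun x hx ↦ ZMod.val_cast_of_lt (mem_range.mp hx))
    (fun x _ ↦ ZMod.natCast_zmod_val x) fun _ _ ↦ rfl

noncomputable def expFrac (n : ℕ) (t : ℤ) : ℂ := exp (2 * Real.pi * I * t / n)

theorem expFrac_eq_stdAddChar (n : ℕ) [NeZero n] (t : ℤ) :
    expFrac n t = ZMod.stdAddChar (t : ZMod n) :=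
  (ZMod.stdAddChar_coe t).symm

theorem expFrac_add (n : ℕ) (a b : ℤ) : expFrac n (a + b) = expFrac n a * expFrac n b := by
  rw [expFrac, expFrac, expFrac, ← exp_add]
  congr 1
  push_cast
  ring

theorem expFrac_congr {n : ℕ} {a b : ℤ} (h : a ≡ b [ZMOD n]) : expFrac n a = expFrac n b := by
  rcases eq_or_ne n 0 with rfl | hn
  · simp [expFrac]
  · have := NeZero.mk hn
    rw [expFrac_eq_stdAddChar, expFrac_eq_stdAddChar, (ZMod.intCast_eq_intCast_iff _ _ _).2 h]

theorem expFrac_mul_mul_right (n : ℕ) {d : ℕ} (hd : d ≠ 0) (t : ℤ) :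
    expFrac (n * d) (t * d) = expFrac n t := by
  rw [expFrac, expFrac]
  congr 1
  push_cast
  rw [← mul_assoc, mul_div_mul_right _ _ (Nat.cast_ne_zero.mpr hd)]

theorem sum_range_expFrac_mul (n : ℕ) (d : ℤ) :
    ∑ z ∈ range n, expFrac n (d * z) = if (n : ℤ) ∣ d then (n : ℂ) else 0 := by
  rcases eq_or_ne n 0 with rfl | hn
  · simp
  have := NeZero.mk hn
  simp_rw [expFrac_eq_stdAddChar, Int.cast_mul, Int.cast_natCast, mul_comm (d : ZMod n)]
  rw [ZMod.sum_range_natCast n fun z ↦ ZMod.stdAddChar (z * (d : ZMod n)),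
    AddChar.sum_mulShift _ (ZMod.isPrimitive_stdAddChar n)]
  simp only [ZMod.intCast_zmod_eq_zero_iff_dvd, ZMod.card]
  split_ifs <;> simp

noncomputable def quadGaussSum (n : ℕ) (c : ℤ) : ℂ := ∑ x ∈ range n, expFrac n (c * x ^ 2)

theorem quadGaussSum_mul_mul (n : ℕ) {d : ℕ} (hd : d ≠ 0) (c : ℤ) :
    quadGaussSum (n * d) (d * c) = d * quadGaussSum n c := by
  have hperiodic : ∀ z y : ℕ, expFrac (n * d) (d * c * ((n * z + y : ℕ) : ℤ) ^ 2)
      = expFrac n (c * (y : ℤ) ^ 2) := by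
    intro z y
    rw [mul_assoc, mul_comm (d : ℤ), expFrac_mul_mul_right n hd]
    exact expFrac_congr (Int.modEq_iff_dvd.mpr ⟨-(c * z * (n * z + 2 * y)), by push_cast; ring⟩)
  rw [quadGaussSum, sum_range_mul]
  simp_rw [hperiodic, sum_const, card_range, nsmul_eq_mul, quadGaussSum]

theorem quadGaussSum_sq_mul {n : ℕ} {c : ℤ} (h : IsCoprime (n : ℤ) (2 * c)) (m : ℕ) :
    quadGaussSum (n ^ 2 * m) c = n * quadGaussSum m c := by
  have hn : n ≠ 0 := by
    rintro rfl
    obtain h2c | h2c := Int.isUnit_iff.mp (isCoprime_zero_left.mp (by simpa using h)) <;> omega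
  rcases eq_or_ne m 0 with rfl | hm
  · simp [quadGaussSum]
  have hnm : n * m ≠ 0 := mul_ne_zero hn hm
  have hsplit : ∀ z y : ℕ, expFrac (n ^ 2 * m) (c * ((n * m * z + y : ℕ) : ℤ) ^ 2)
      = expFrac (n ^ 2 * m) (c * (y : ℤ) ^ 2) * expFrac n (2 * c * y * z) := by
    intro z y
    rw [← expFrac_mul_mul_right n hnm, show n * (n * m) = n ^ 2 * m by ring, ← expFrac_add]
    exact expFrac_congr (Int.modEq_iff_dvd.mpr ⟨-(c * m * z ^ 2), by push_cast; ring⟩)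
  have hcross : ∀ y : ℕ, ∑ z ∈ range n, expFrac n (2 * c * y * z)
      = if n ∣ y then (n : ℂ) else 0 := by
    intro y
    rw [sum_range_expFrac_mul]
    congr 1
    simp only [eq_iff_iff, ← Int.natCast_dvd_natCast]
    exact ⟨h.dvd_of_dvd_mul_left, fun hy ↦ dvd_mul_of_dvd_right hy _⟩
  calc quadGaussSum (n ^ 2 * m) c
      = ∑ y ∈ range (n * m), expFrac (n ^ 2 * m) (c * (y : ℤ) ^ 2) *
          ∑ z ∈ range n, expFrac n (2 * c * y * z) := by
        rw [quadGaussSum, show n ^ 2 * m = n * m * n by ring, sum_range_mul, sum_comm]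
        simp_rw [mul_sum, ← show n ^ 2 * m = n * m * n by ring, hsplit]
    _ = ∑ y ∈ range (n * m),
          if n ∣ y then expFrac (n ^ 2 * m) (c * (y : ℤ) ^ 2) * n else 0 := by
        simp_rw [hcross, mul_ite, mul_zero]
    _ = n * quadGaussSum m c := by
        rw [sum_range_mul_ite_dvd _ hn, quadGaussSum, mul_sum]
        refine sum_congr rfl fun w _ ↦ ?_
        rw [mul_comm, show n ^ 2 * m = m * n ^ 2 by ring,
          ← expFrac_mul_mul_right m (pow_ne_zero 2 hn)]
        push_cast
        ring_nf

theorem quadGaussSum_prime_mul_of_not_isSquare {p : ℕ} [Fact p.Prime] (hp2 : p ≠ 2) {c u : ℤ}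
    (hc : ¬(p : ℤ) ∣ c) (hu : ¬IsSquare (u : ZMod p)) :
    quadGaussSum p (u * c) = -quadGaussSum p c := by
  set ψ := (ZMod.stdAddChar (N := p)).mulShift c
  have hψ : ψ ≠ 1 :=
    ZMod.isPrimitive_stdAddChar p (by rwa [Ne, ZMod.intCast_zmod_eq_zero_iff_dvd])
  have hsum : ∀ a : ℤ, quadGaussSum p (a * c) = ∑ x : ZMod p, ψ (a * x ^ 2) := by
    intro a
    rw [quadGaussSum, ← ZMod.sum_range_natCast]
    refine sum_congr rfl fun x _ ↦ ?_
    rw [expFrac_eq_stdAddChar, AddChar.mulShift_apply]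
    push_cast
    ring_nf
  have hsum_one : quadGaussSum p c = ∑ x : ZMod p, ψ (x ^ 2) := by simpa using hsum 1
  rw [hsum, hsum_one]
  exact AddChar.sum_mul_sq_of_not_isSquare (by rwa [ZMod.ringChar_zmod_n]) hψ hu

theorem quadGaussSum_prime_pow_mul_of_not_isSquare {p : ℕ} [hp : Fact p.Prime] (hp2 : p ≠ 2)
    {c u : ℤ} (hc : ¬(p : ℤ) ∣ c) (hu : ¬IsSquare (u : ZMod p)) (k : ℕ) :
    quadGaussSum (p ^ k) (u * c) = (-1) ^ k * quadGaussSum (p ^ k) c := by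
  have hprime : Prime (p : ℤ) := Nat.prime_iff_prime_int.mp hp.out
  have hp2' : ¬(p : ℤ) ∣ 2 := fun h ↦
    hp2 ((Nat.prime_dvd_prime_iff_eq hp.out Nat.prime_two).mp (by exact_mod_cast h))
  have hu' : ¬(p : ℤ) ∣ u := fun h ↦
    hu ⟨0, by rw [(ZMod.intCast_zmod_eq_zero_iff_dvd u p).mpr h, mul_zero]⟩
  have hcop : ∀ a : ℤ, ¬(p : ℤ) ∣ a → IsCoprime (p : ℤ) (2 * a) := fun a ha ↦
    hprime.coprime_iff_not_dvd.mpr fun h ↦ (hprime.dvd_or_dvd h).elim hp2' ha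
  have huc : ¬(p : ℤ) ∣ u * c := fun h ↦ (hprime.dvd_or_dvd h).elim hu' hc
  induction k using Nat.twoStepInduction with
  | zero => simp [quadGaussSum]
  | one =>
    rw [pow_one, pow_one, neg_one_mul]
    exact quadGaussSum_prime_mul_of_not_isSquare hp2 hc hu
  | more k ih _ =>
    rw [show p ^ (k + 2) = p ^ 2 * p ^ k by ring, quadGaussSum_sq_mul (hcop _ huc),
      quadGaussSum_sq_mul (hcop c hc), ih]
    ring

theorem stmt9 (p : ℕ) (hp : p.Prime) (hodd : Odd p)
    (u : ℤ) (hu : ¬ ∃ y : ZMod p, y ^ 2 = (u : ZMod p))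
    (r s : ℕ) (hr : 1 ≤ r) (hs : s ≤ r) :
    (Real.sqrt (p ^ r) : ℂ)⁻¹ *
        ∑ x ∈ Finset.range (p ^ r),
          Complex.exp (2 * Real.pi * Complex.I *
            ((p : ℂ) ^ s * ((p : ℂ) ^ r + 1) * (x : ℂ) ^ 2) / (2 * (p : ℂ) ^ r))
      = (-1 : ℂ) ^ (r - s) *
        ((Real.sqrt (p ^ r) : ℂ)⁻¹ *
          ∑ x ∈ Finset.range (p ^ r),
            Complex.exp (2 * Real.pi * Complex.I *
              ((u : ℂ) * (p : ℂ) ^ s * ((p : ℂ) ^ r + 1) * (x : ℂ) ^ 2) / (2 * (p : ℂ) ^ r))) := by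
  have := Fact.mk hp
  have hp2 : p ≠ 2 := by rintro rfl; exact absurd hodd (by decide)
  obtain ⟨m, hm⟩ : ∃ m : ℤ, (p : ℤ) ^ r + 1 = 2 * m := by
    obtain ⟨m, hm⟩ := (hodd.pow (n := r)).add_one
    exact ⟨m, by exact_mod_cast (by omega : p ^ r + 1 = 2 * m)⟩
  have hpm : ¬(p : ℤ) ∣ m := fun h ↦ (Nat.prime_iff_prime_int.mp hp).not_dvd_one <| by
    simpa [← hm] using dvd_sub (h.mul_left 2) (dvd_pow_self (p : ℤ) (by omega : r ≠ 0))
  have hsum : ∀ a : ℤ, ∑ x ∈ range (p ^ r), exp (2 * Real.pi * I *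
      ((a : ℂ) * (p : ℂ) ^ s * ((p : ℂ) ^ r + 1) * (x : ℂ) ^ 2) / (2 * (p : ℂ) ^ r))
      = (p : ℂ) ^ s * quadGaussSum (p ^ (r - s)) (a * m) := by
    intro a
    have hr' : p ^ r = p ^ (r - s) * p ^ s := by rw [← pow_add, Nat.sub_add_cancel hs]
    have hmC : (p : ℂ) ^ r + 1 = 2 * m := by exact_mod_cast hm
    rw [← Nat.cast_pow, ← quadGaussSum_mul_mul _ (pow_ne_zero s hp.ne_zero), ← hr',
      quadGaussSum]
    refine sum_congr rfl fun x _ ↦ ?_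
    rw [expFrac, hmC]
    congr 1
    push_cast
    field_simp
  have hu' : ¬IsSquare (u : ZMod p) := fun ⟨y, hy⟩ ↦ hu ⟨y, by rw [hy, sq]⟩
  have hsign : ((-1 : ℂ) ^ (r - s)) ^ 2 = 1 := by rw [← pow_mul, pow_mul', neg_one_sq, one_pow]
  have hsum_one := hsum 1
  simp only [Int.cast_one, one_mul] at hsum_one
  rw [hsum_one, hsum u, quadGaussSum_prime_pow_mul_of_not_isSquare hp2 hpm hu']
  linear_combination
    (-((Real.sqrt (p ^ r) : ℂ)⁻¹ * (p : ℂ) ^ s * quadGaussSum (p ^ (r - s)) m)) * hsign
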